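/- The Shale–Weil operator R(k_φ) intertwines the Schrödinger representation with its twist by the rotation k_φ: for every φ ∈ ℝ with sin φ ≠ 0, all a,b ∈ ℝ^k, and every integrable function f : ℝ^k → ℂ, one has R(k_φ)(W((a,b),0)f) = W((a cos φ − b sin φ, a sin φ + b cos φ),0)(R(k_φ)f) pointwise on ℝ^k. -/
import Mathlib

open scoped RealInnerProductSpace
open MeasureTheory

/-- ℝ^k as a Euclidean space. -/
abbrev E (k : ℕ) := EuclideanSpace ℝ (Fin k)

/-- `e(t) = exp(2πit)`. -/
noncomputable def e (t : ℝ) : ℂ := Complex.exp (2 * Real.pi * Complex.I * t)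

/-- The Schrödinger representation:
`[W((ξ₁,ξ₂),ζ)f](w) = e(ζ − ½ξ₁·ξ₂ + ξ₁·w) f(w − ξ₂)`. -/
noncomputable def W {k : ℕ} (g : (E k × E k) × ℝ) (f : E k → ℂ) : E k → ℂ :=
  fun w => e (g.2 - (1 / 2) * ⟪g.1.1, g.1.2⟫ + ⟪g.1.1, w⟫) * f (w - g.1.2)

/-- The Shale–Weil operator attached to the rotation `k_φ` (for `sin φ ≠ 0`):
`[R(k_φ)f](w) = |sin φ|^{−k/2} ∫ e((½(‖w‖²+‖v‖²)cos φ − w·v)/sin φ) f(v) dv`. -/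
noncomputable def Rk {k : ℕ} (φ : ℝ) (f : E k → ℂ) : E k → ℂ :=
  fun w => ((|Real.sin φ| ^ (-(k : ℝ) / 2) : ℝ) : ℂ) *
    ∫ v : E k, e (((1 / 2) * (‖w‖ ^ 2 + ‖v‖ ^ 2) * Real.cos φ - ⟪w, v⟫) / Real.sin φ) * f v

lemma e_mul (x y : ℝ) : e x * e y = e (x + y) := by
  rw [e, e, e, ← Complex.exp_add]
  push_cast
  ring_nf

lemma div_aux {s x y z t : ℝ} (hs : s ≠ 0) (h : x + y * s = z * s + t) :
    x / s + y = z + t / s := by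
  field_simp
  linarith [h]

lemma phase_eq {k : ℕ} (s c : ℝ) (hs : s ≠ 0) (hsc : s ^ 2 + c ^ 2 = 1)
    (a b w u : E k) :
    ((1/2) * (‖w‖^2 + ‖u + b‖^2) * c - ⟪w, u + b⟫) / s + ((0:ℝ) - (1/2) * ⟪a, b⟫ + ⟪a, u + b⟫)
    = ((0:ℝ) - (1/2) * ⟪c • a - s • b, s • a + c • b⟫ + ⟪c • a - s • b, w⟫)
      + ((1/2) * (‖w - (s • a + c • b)‖^2 + ‖u‖^2) * c - ⟪w - (s • a + c • b), u⟫) / s := by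
  simp only [← real_inner_self_eq_norm_sq, inner_add_left,
    inner_add_right, inner_sub_left, inner_sub_right, real_inner_smul_left,
    real_inner_smul_right]
  apply div_aux hs
  rw [real_inner_comm b a, real_inner_comm u b, real_inner_comm u a, real_inner_comm u w,
    real_inner_comm w a, real_inner_comm w b]
  linear_combination (⟪a,b⟫/2 * s + ⟪a,w⟫ - ⟪a,u⟫*s - c/2*⟪b,b⟫ + ⟪w,b⟫ - s/2*⟪b,a⟫ - s/2*⟪a,b⟫ + s*⟪a,u⟫ - ⟪a,w⟫) * hsc

/-- `R(k_φ)` intertwines the Schrödinger representation with its twist by the rotation `k_φ`: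
`R(k_φ)(W((a,b),0)f) = W((a cos φ − b sin φ, a sin φ + b cos φ),0)(R(k_φ)f)`. -/
theorem shale_weil_kphi_intertwines {k : ℕ} (hk : 0 < k)
    (φ : ℝ) (hφ : Real.sin φ ≠ 0) (a b : E k) (f : E k → ℂ) (hf : Integrable f) :
    Rk φ (W ((a, b), 0) f) =
      W ((Real.cos φ • a - Real.sin φ • b, Real.sin φ • a + Real.cos φ • b), 0) (Rk φ f) := by
  funext w
  set s := Real.sin φ with hs
  set c := Real.cos φ with hc
  have hsc : s ^ 2 + c ^ 2 = 1 := Real.sin_sq_add_cos_sq φ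
  simp only [Rk, W]
  rw [← integral_add_right_eq_self (fun v => e (((1/2) * (‖w‖^2 + ‖v‖^2) * c - ⟪w, v⟫) / s) *
      (e ((0:ℝ) - (1/2) * ⟪a, b⟫ + ⟪a, v⟫) * f (v - b))) b]
  simp only [add_sub_cancel_right]
  have key : ∀ u : E k,
      e (((1/2) * (‖w‖^2 + ‖u + b‖^2) * c - ⟪w, u + b⟫) / s) *
        (e ((0:ℝ) - (1/2) * ⟪a, b⟫ + ⟪a, u + b⟫) * f u)
      = e ((0:ℝ) - (1/2) * ⟪c • a - s • b, s • a + c • b⟫ + ⟪c • a - s • b, w⟫) *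
        (e (((1/2) * (‖w - (s • a + c • b)‖^2 + ‖u‖^2) * c - ⟪w - (s • a + c • b), u⟫) / s) * f u) := by
    intro u
    rw [← mul_assoc, ← mul_assoc, e_mul, e_mul, phase_eq s c hφ hsc]
  simp only [key]
  rw [integral_const_mul]
  ring
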